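/- In the relaxed problem (P4), as all penalty parameters η₀, η₁, …, η_ñ → 0⁺, if (u^η, w₀^η, {w_i^η}) are global minimizers with uniformly bounded u^η, then any limit point u* of u^η satisfies the original constraints of (P3): Tu* is the limit of w₀^η and H^i u* ∈ Ω_i for each i, i.e., γ̃ᵢᵀ(H^i u*) + (H^i u*)ᵀ D^i (H^i u*) ≤ C^i. -/

import Mathlib

open Filter

lemma aux_sq_sum_tendsto {n : ℕ} (f : ℕ → Fin n → ℝ)
    (h : Tendsto (fun k => ∑ j, (f k j)^2) atTop (nhds 0)) (j : Fin n) :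
    Tendsto (fun k => f k j) atTop (nhds 0) := by
  have h1 : Tendsto (fun k => (f k j)^2) atTop (nhds 0) :=
    tendsto_of_tendsto_of_tendsto_of_le_of_le tendsto_const_nhds h
      (fun k => sq_nonneg _)
      (fun k => Finset.single_le_sum (fun j _ => sq_nonneg (f k j)) (Finset.mem_univ j))
  have h2 : Tendsto (fun k => |f k j|) atTop (nhds 0) := by
    have := (Real.continuous_sqrt.tendsto 0).comp h1
    simpa [Function.comp_def, Real.sqrt_sq_eq_abs] using this
  rw [tendsto_zero_iff_norm_tendsto_zero]
  simpa [Real.norm_eq_abs] using h2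

set_option maxHeartbeats 1600000 in
/-- As the penalty parameters go to 0, any limit point u* of bounded global minimizers
of (P4) satisfies the original constraints of (P3): w₀ → Tu* along the subsequence and
H^i u* lies in each Ω_i. -/
theorem stmt14 (p t nOAR : ℕ) (q : Fin nOAR → ℕ)
    (T : Matrix (Fin t) (Fin p) ℝ) (H : ∀ i, Matrix (Fin (q i)) (Fin p) ℝ)
    (αt : Fin t → ℝ) (B : Fin t → ℝ) (hB : ∀ j, 0 ≤ B j)
    (γ : ∀ i, Fin (q i) → ℝ) (D : ∀ i, Fin (q i) → ℝ) (hD : ∀ i j, 0 < D i j)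
    (C : Fin nOAR → ℝ)
    (η0 : ℕ → ℝ) (η : ℕ → Fin nOAR → ℝ)
    (hη0pos : ∀ k, 0 < η0 k) (hηpos : ∀ k i, 0 < η k i)
    (hη0lim : Tendsto η0 atTop (nhds 0))
    (hηlim : ∀ i, Tendsto (fun k => η k i) atTop (nhds 0))
    (G : ℕ → (Fin p → ℝ) → (Fin t → ℝ) → (∀ i, Fin (q i) → ℝ) → ℝ)
    (hG : ∀ k u' w0' w', G k u' w0' w' =
      (∑ j, αt j * w0' j) - (∑ j, B j * w0' j ^ 2)
      + (1 / (2 * η0 k)) * ∑ j, (w0' j - T.mulVec u' j) ^ 2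
      + ∑ i, (1 / (2 * η k i)) * ∑ j, (w' i j - (H i).mulVec u' j) ^ 2)
    (u : ℕ → Fin p → ℝ) (w0 : ℕ → Fin t → ℝ) (w : ℕ → ∀ i, Fin (q i) → ℝ)
    (hfeas : ∀ k, (∀ a, 0 ≤ u k a) ∧
      ∀ i, (∑ j, γ i j * w k i j + ∑ j, D i j * (w k i j) ^ 2) ≤ C i)
    (hmin : ∀ k, ∀ u' w0' w', (∀ a, 0 ≤ u' a) →
      (∀ i, (∑ j, γ i j * w' i j + ∑ j, D i j * (w' i j) ^ 2) ≤ C i) →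
      G k (u k) (w0 k) (w k) ≤ G k u' w0' w')
    (Gbound : ℝ) (hGbound : ∀ k, G k (u k) (w0 k) (w k) ≤ Gbound)
    (ubound : ℝ) (hub : ∀ k a, |u k a| ≤ ubound)
    (ustar : Fin p → ℝ) (φ : ℕ → ℕ) (hφ : StrictMono φ)
    (hlim : Tendsto (fun k => u (φ k)) atTop (nhds ustar)) :
    Tendsto (fun k => w0 (φ k)) atTop (nhds (T.mulVec ustar)) ∧
    ∀ i, (∑ j, γ i j * (H i).mulVec ustar j
          + ∑ j, D i j * ((H i).mulVec ustar j) ^ 2) ≤ C i := by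
  classical
  have habs : ∀ x : ℝ, |x| ≤ (1 + x^2)/2 := fun x => by
    nlinarith [sq_nonneg (|x| - 1), sq_abs x, abs_nonneg x]
  obtain ⟨A, hAdef⟩ : ∃ A : ℝ, A = ∑ j, ∑ a, |T j a| := ⟨_, rfl⟩
  obtain ⟨S, hSdef⟩ : ∃ S : ℝ, S = |ubound| * A := ⟨_, rfl⟩
  obtain ⟨Bm, hBmdef⟩ : ∃ Bm : ℝ, Bm = ∑ j, B j := ⟨_, rfl⟩
  obtain ⟨cb, hcbdef⟩ : ∃ cb : ℝ, cb = 2 * Bm * S + ∑ j, |αt j| := ⟨_, rfl⟩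
  have hA0 : 0 ≤ A := hAdef ▸ Finset.sum_nonneg fun j _ => Finset.sum_nonneg fun a _ => abs_nonneg _
  have hS0 : 0 ≤ S := hSdef ▸ mul_nonneg (abs_nonneg _) hA0
  have hBm0 : 0 ≤ Bm := hBmdef ▸ Finset.sum_nonneg fun j _ => hB j
  have hBmle : ∀ j, B j ≤ Bm := fun j => hBmdef ▸
    Finset.single_le_sum (f := B) (fun j _ => hB j) (Finset.mem_univ j)
  have hcb0 : 0 ≤ cb := by
    have h : 0 ≤ ∑ j, |αt j| := Finset.sum_nonneg fun j _ => abs_nonneg _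
    rw [hcbdef]; nlinarith
  -- bound on T.mulVec (u k)
  have hsb : ∀ k j, |T.mulVec (u k) j| ≤ S := by
    intro k j
    have h1 : |∑ a, T j a * u k a| ≤ ∑ a, |T j a| * |ubound| := by
      refine (Finset.abs_sum_le_sum_abs _ _).trans (Finset.sum_le_sum fun a _ => ?_)
      rw [abs_mul]
      exact mul_le_mul_of_nonneg_left ((hub k a).trans (le_abs_self _)) (abs_nonneg _)
    have h3 : ∑ a, |T j a| ≤ A := hAdef ▸
      Finset.single_le_sum (f := fun j => ∑ a, |T j a|)
        (fun j _ => Finset.sum_nonneg fun a _ => abs_nonneg _) (Finset.mem_univ j)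
    have h2 : ∑ a, |T j a| * |ubound| ≤ S := by
      rw [hSdef]
      calc ∑ a, |T j a| * |ubound| = (∑ a, |T j a|) * |ubound| := by
            rw [Finset.sum_mul]
        _ ≤ A * |ubound| := mul_le_mul_of_nonneg_right h3 (abs_nonneg _)
        _ = |ubound| * A := mul_comm _ _
    have he : T.mulVec (u k) j = ∑ a, T j a * u k a := by
      simp [Matrix.mulVec, dotProduct]
    rw [he]
    exact h1.trans h2
  have hcbb : ∀ k j, |2 * B j * T.mulVec (u k) j - αt j| ≤ cb := by
    intro k j
    have h1 : |2 * B j * T.mulVec (u k) j - αt j|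
        ≤ 2 * B j * |T.mulVec (u k) j| + |αt j| := by
      refine (abs_sub _ _).trans ?_
      rw [abs_mul, abs_mul]
      simp [abs_of_nonneg (hB j)]
    have h2 : 2 * B j * |T.mulVec (u k) j| ≤ 2 * Bm * S := by
      have := hsb k j
      nlinarith [abs_nonneg (T.mulVec (u k) j), hBmle j, hB j]
    have h3 : |αt j| ≤ ∑ j', |αt j'| :=
      Finset.single_le_sum (f := fun j' => |αt j'|) (fun j' _ => abs_nonneg _)
        (Finset.mem_univ j)
    rw [hcbdef]; linarith
  -- key inequality from minimality
  have key : ∀ k, 1/(2*η0 k) * ∑ j, (w0 k j - T.mulVec (u k) j)^2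
      ≤ ∑ j, (B j * (w0 k j - T.mulVec (u k) j)^2
        + (w0 k j - T.mulVec (u k) j) * (2*B j*T.mulVec (u k) j - αt j)) := by
    intro k
    have h := hmin k (u k) (T.mulVec (u k)) (w k) (hfeas k).1 (hfeas k).2
    rw [hG, hG] at h
    simp only [sub_self, ne_eq, OfNat.ofNat_ne_zero, not_false_eq_true, zero_pow,
      Finset.sum_const_zero, mul_zero, add_zero] at h
    have hexp : ∑ j, (B j * (w0 k j - T.mulVec (u k) j)^2
        + (w0 k j - T.mulVec (u k) j) * (2*B j*T.mulVec (u k) j - αt j))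
        = (∑ j, (αt j * T.mulVec (u k) j - B j * (T.mulVec (u k) j)^2))
          - ∑ j, (αt j * w0 k j - B j * (w0 k j)^2) := by
      rw [← Finset.sum_sub_distrib]
      exact Finset.sum_congr rfl fun j _ => by ring
    rw [hexp, Finset.sum_sub_distrib, Finset.sum_sub_distrib]
    linarith
  -- bound on sum of squares when 1/(2η0) - Bm ≥ 1
  have key2 : ∀ k, 1 ≤ 1/(2*η0 k) - Bm →
      ∑ j, (w0 k j - T.mulVec (u k) j)^2 ≤ t * cb^2 / (1/(2*η0 k) - Bm)^2 := by
    intro k hk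
    obtain ⟨L, hLdef⟩ : ∃ L : ℝ, L = 1/(2*η0 k) - Bm := ⟨_, rfl⟩
    rw [← hLdef] at hk ⊢
    have hL0 : 0 < L := lt_of_lt_of_le one_pos hk
    have hterm : ∀ j : Fin t, B j * (w0 k j - T.mulVec (u k) j)^2
        + (w0 k j - T.mulVec (u k) j) * (2*B j*T.mulVec (u k) j - αt j)
        ≤ Bm * (w0 k j - T.mulVec (u k) j)^2
          + (L/2 * (w0 k j - T.mulVec (u k) j)^2 + cb^2/(2*L)) := by
      intro j
      obtain ⟨d, hd⟩ : ∃ d : ℝ, d = w0 k j - T.mulVec (u k) j := ⟨_, rfl⟩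
      obtain ⟨c, hc⟩ : ∃ c : ℝ, c = 2*B j*T.mulVec (u k) j - αt j := ⟨_, rfl⟩
      rw [← hd, ← hc]
      have h1 : d * c ≤ |d| * cb := by
        calc d * c ≤ |d * c| := le_abs_self _
          _ = |d| * |c| := abs_mul _ _
          _ ≤ |d| * cb := mul_le_mul_of_nonneg_left (hc ▸ hcbb k j) (abs_nonneg _)
      have h2 : 2*L*(|d| * cb) ≤ L^2 * d^2 + cb^2 := by
        nlinarith [sq_nonneg (L*|d| - cb), sq_abs d]
      have h3 : |d| * cb ≤ L/2 * d^2 + cb^2/(2*L) := by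
        have e : L/2*d^2 + cb^2/(2*L) = (L^2*d^2 + cb^2)/(2*L) := by
          field_simp
        rw [e, le_div_iff₀ (by positivity : (0:ℝ) < 2*L)]
        nlinarith [h2]
      have h4 : B j * d^2 ≤ Bm * d^2 :=
        mul_le_mul_of_nonneg_right (hBmle j) (sq_nonneg _)
      linarith
    have hsum : ∑ j, (B j * (w0 k j - T.mulVec (u k) j)^2
        + (w0 k j - T.mulVec (u k) j) * (2*B j*T.mulVec (u k) j - αt j))
        ≤ Bm * (∑ j, (w0 k j - T.mulVec (u k) j)^2)
          + (L/2 * (∑ j, (w0 k j - T.mulVec (u k) j)^2) + t * (cb^2/(2*L))) := by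
      calc _ ≤ ∑ j : Fin t, (Bm * (w0 k j - T.mulVec (u k) j)^2
          + (L/2 * (w0 k j - T.mulVec (u k) j)^2 + cb^2/(2*L))) :=
            Finset.sum_le_sum fun j _ => hterm j
        _ = _ := by
          rw [Finset.sum_add_distrib, Finset.sum_add_distrib, ← Finset.mul_sum,
            ← Finset.mul_sum, Finset.sum_const, Finset.card_univ, Fintype.card_fin,
            nsmul_eq_mul]
    have hk2 := key k
    have h5 : L/2 * (∑ j, (w0 k j - T.mulVec (u k) j)^2) ≤ t * (cb^2/(2*L)) := by
      have he : 1/(2*η0 k) = L + Bm := by rw [hLdef]; ring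
      rw [he] at hk2
      nlinarith [hk2, hsum]
    have h7 : t * (cb^2/(2*L)) * (2*L) = t * cb^2 := by field_simp
    have h6 : (∑ j, (w0 k j - T.mulVec (u k) j)^2) * L^2 ≤ t * cb^2 := by
      nlinarith [mul_le_mul_of_nonneg_right h5 (by positivity : (0:ℝ) ≤ 2*L)]
    rw [le_div_iff₀ (by positivity : (0:ℝ) < L^2)]
    exact h6
  -- 1/(2η0) - Bm → ∞
  have hLtop : Tendsto (fun k => 1/(2*η0 k) - Bm) atTop atTop := by
    have h1 : Tendsto (fun k => 2*η0 k) atTop (nhdsWithin 0 (Set.Ioi 0)) := by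
      apply tendsto_nhdsWithin_of_tendsto_nhds_of_eventually_within
      · simpa using hη0lim.const_mul 2
      · exact Eventually.of_forall fun k =>
          Set.mem_Ioi.mpr (by have := hη0pos k; linarith)
    have h2 : Tendsto (fun k => (2*η0 k)⁻¹) atTop atTop := h1.inv_tendsto_nhdsGT_zero
    have := tendsto_atTop_add_const_right atTop (-Bm) h2
    simpa [one_div, sub_eq_add_neg] using this
  have hev : ∀ᶠ k in atTop, 1 ≤ 1/(2*η0 k) - Bm := hLtop.eventually_ge_atTop 1
  -- sum of squares for w0 tends to 0
  have hsum0 : Tendsto (fun k => ∑ j, (w0 k j - T.mulVec (u k) j)^2) atTop (nhds 0) := by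
    have htc : Tendsto (fun k => t * cb^2 / (1/(2*η0 k) - Bm)^2) atTop (nhds 0) := by
      apply Tendsto.div_atTop tendsto_const_nhds
      have := hLtop.atTop_mul_atTop₀ hLtop
      simpa [sq] using this
    refine tendsto_of_tendsto_of_tendsto_of_le_of_le' tendsto_const_nhds htc
      (Eventually.of_forall fun k => Finset.sum_nonneg fun j _ => sq_nonneg _)
      (hev.mono fun k hk => key2 k hk)
  have hd0 : ∀ j, Tendsto (fun k => w0 k j - T.mulVec (u k) j) atTop (nhds 0) :=
    aux_sq_sum_tendsto _ hsum0
  constructor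
  · rw [tendsto_pi_nhds]
    intro j
    have h1 := (hd0 j).comp hφ.tendsto_atTop
    have h2 : Tendsto (fun k => T.mulVec (u (φ k)) j) atTop (nhds (T.mulVec ustar j)) := by
      simp only [Matrix.mulVec, dotProduct]
      exact tendsto_finset_sum _ fun a _ => ((tendsto_pi_nhds.1 hlim a).const_mul _)
    have := h1.add h2
    simpa [Function.comp_def, sub_add_cancel] using this
  · intro i
    obtain ⟨V, hVdef⟩ : ∃ V : ℝ, V = 2*t*cb^2 + 2*S^2 := ⟨_, rfl⟩
    obtain ⟨K, hKdef⟩ : ∃ K : ℝ, K = (∑ j, |αt j|) * (1+V)/2 + Bm * V := ⟨_, rfl⟩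
    have hV0 : 0 ≤ V := by rw [hVdef]; positivity
    have lower : ∀ k, 1 ≤ 1/(2*η0 k) - Bm →
        ∑ j, (w k i j - (H i).mulVec (u k) j)^2 ≤ 2*η k i*(Gbound + K) := by
      intro k hk
      have hdb : ∀ j, (w0 k j - T.mulVec (u k) j)^2 ≤ t*cb^2 := by
        intro j
        have h1 := key2 k hk
        have h2 : (w0 k j - T.mulVec (u k) j)^2
            ≤ ∑ j', (w0 k j' - T.mulVec (u k) j')^2 :=
          Finset.single_le_sum (f := fun j' => (w0 k j' - T.mulVec (u k) j')^2)
            (fun j' _ => sq_nonneg _) (Finset.mem_univ j)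
        have hL : (1:ℝ) ≤ (1/(2*η0 k) - Bm)^2 := by nlinarith [hk]
        have h3 : t*cb^2/(1/(2*η0 k) - Bm)^2 ≤ t*cb^2 :=
          div_le_self (by positivity) hL
        linarith
      have hv2 : ∀ j, (w0 k j)^2 ≤ V := by
        intro j
        have h1 := hdb j
        obtain ⟨h2a, h2b⟩ := abs_le.1 (hsb k j)
        rw [hVdef]
        nlinarith [sq_nonneg (w0 k j - 2*T.mulVec (u k) j),
          mul_nonneg (by linarith : (0:ℝ) ≤ S - T.mulVec (u k) j)
            (by linarith : (0:ℝ) ≤ S + T.mulVec (u k) j)]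
      have hlow : -K ≤ (∑ j, αt j * w0 k j) - ∑ j, B j * (w0 k j)^2 := by
        have h1 : ∑ j, B j * (w0 k j)^2 ≤ Bm * V := by
          calc ∑ j, B j * (w0 k j)^2 ≤ ∑ j, B j * V :=
              Finset.sum_le_sum fun j _ => mul_le_mul_of_nonneg_left (hv2 j) (hB j)
            _ = Bm * V := by rw [← Finset.sum_mul, ← hBmdef]
        have h2 : -((∑ j, |αt j|) * (1+V)/2) ≤ ∑ j, αt j * w0 k j := by
          have h2' : ∑ j, (-(|αt j| * (1+V)/2)) ≤ ∑ j, αt j * w0 k j := by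
            refine Finset.sum_le_sum fun j _ => ?_
            have ha := habs (w0 k j)
            have hb := hv2 j
            have hc := neg_abs_le (αt j * w0 k j)
            have hd' : |αt j * w0 k j| = |αt j| * |w0 k j| := abs_mul _ _
            nlinarith [abs_nonneg (αt j), abs_nonneg (w0 k j)]
          have heq : ∑ j, (-(|αt j| * (1+V)/2)) = -((∑ j, |αt j|) * (1+V)/2) := by
            rw [Finset.sum_neg_distrib, ← Finset.sum_div, ← Finset.sum_mul]
          linarith [h2']
        rw [hKdef]; linarith
      have hg := hGbound k
      rw [hG] at hg
      have hP0 : 0 ≤ (1/(2*η0 k)) * ∑ j, (w0 k j - T.mulVec (u k) j)^2 :=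
        mul_nonneg (le_of_lt (one_div_pos.2 (by have := hη0pos k; linarith)))
          (Finset.sum_nonneg fun j _ => sq_nonneg _)
      have hPi : (1/(2*η k i)) * ∑ j, (w k i j - (H i).mulVec (u k) j)^2
          ≤ ∑ i', (1/(2*η k i')) * ∑ j, (w k i' j - (H i').mulVec (u k) j)^2 :=
        Finset.single_le_sum
          (f := fun i' => (1/(2*η k i')) * ∑ j, (w k i' j - (H i').mulVec (u k) j)^2)
          (fun i' _ => mul_nonneg (le_of_lt (one_div_pos.2 (by have := hηpos k i'; linarith)))
            (Finset.sum_nonneg fun j _ => sq_nonneg _)) (Finset.mem_univ i)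
      have hkey : (1/(2*η k i)) * ∑ j, (w k i j - (H i).mulVec (u k) j)^2
          ≤ Gbound + K := by linarith
      have hη2 : (0:ℝ) < 2*η k i := by have := hηpos k i; linarith
      have hne : (2*η k i) ≠ 0 := ne_of_gt hη2
      calc ∑ j, (w k i j - (H i).mulVec (u k) j)^2
          = (2*η k i) * ((1/(2*η k i)) * ∑ j, (w k i j - (H i).mulVec (u k) j)^2) := by
            rw [← mul_assoc, mul_one_div, div_self hne, one_mul]
        _ ≤ (2*η k i)*(Gbound + K) :=
            mul_le_mul_of_nonneg_left hkey (le_of_lt hη2)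
        _ = 2*η k i*(Gbound + K) := by ring
    have hws : Tendsto (fun k => ∑ j, (w k i j - (H i).mulVec (u k) j)^2) atTop (nhds 0) := by
      have htc : Tendsto (fun k => 2*η k i*(Gbound + K)) atTop (nhds 0) := by
        have := ((hηlim i).const_mul 2).mul_const (Gbound + K)
        simpa [mul_assoc] using this
      refine tendsto_of_tendsto_of_tendsto_of_le_of_le' tendsto_const_nhds htc
        (Eventually.of_forall fun k => Finset.sum_nonneg fun j _ => sq_nonneg _)
        (hev.mono fun k hk => lower k hk)
    have hwj : ∀ j, Tendsto (fun k => w (φ k) i j) atTop (nhds ((H i).mulVec ustar j)) := by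
      intro j
      have h1 := (aux_sq_sum_tendsto _ hws j).comp hφ.tendsto_atTop
      have h2 : Tendsto (fun k => (H i).mulVec (u (φ k)) j) atTop
          (nhds ((H i).mulVec ustar j)) := by
        simp only [Matrix.mulVec, dotProduct]
        exact tendsto_finset_sum _ fun a _ => ((tendsto_pi_nhds.1 hlim a).const_mul _)
      have := h1.add h2
      simpa [Function.comp_def, sub_add_cancel] using this
    have hcont : Tendsto (fun k => ∑ j, γ i j * w (φ k) i j
        + ∑ j, D i j * (w (φ k) i j)^2) atTop
        (nhds (∑ j, γ i j * (H i).mulVec ustar j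
          + ∑ j, D i j * ((H i).mulVec ustar j)^2)) := by
      apply Tendsto.add
      · exact tendsto_finset_sum _ fun j _ => (hwj j).const_mul _
      · exact tendsto_finset_sum _ fun j _ => ((hwj j).pow 2).const_mul _
    exact le_of_tendsto hcont (Eventually.of_forall fun k => (hfeas (φ k)).2 i)
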